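/- Under the generalized β-conformal change L̄(y) = f(e^σ·L(y), β(y)), the matrix ḡ^{ij} := (e^{−σ}/p)·g^{ij} − s₀·bⁱ·bʲ − s₋₁·(yⁱ·bʲ + yʲ·bⁱ) − s₋₂·yⁱ·yʲ is the inverse of the transformed metric tensor ḡ_{ij} = (1/2)·∂²(L̄²)/∂yⁱ∂yʲ, i.e. ḡ^{ir}·ḡ_{rj} = δⁱ_j at every y ∈ Ω (summation over r). -/

import Mathlib

open Real

noncomputable section

/-- Partial derivative of `f : ℝ × ℝ → ℝ` with respect to its first argument. -/
def pds (f : ℝ × ℝ → ℝ) (x : ℝ × ℝ) : ℝ := fderiv ℝ f x (1, 0)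

/-- Partial derivative of `f : ℝ × ℝ → ℝ` with respect to its second argument. -/
def pdt (f : ℝ × ℝ → ℝ) (x : ℝ × ℝ) : ℝ := fderiv ℝ f x (0, 1)

/-- Partial derivative with respect to the i-th coordinate `yⁱ`. -/
def pdi {n : ℕ} (F : (Fin n → ℝ) → ℝ) (i : Fin n) (y : Fin n → ℝ) : ℝ :=
  fderiv ℝ F y (Pi.single i 1)

/-- Finsler metric tensor g_{ij} = (1/2)·∂²(L²)/∂yⁱ∂yʲ. -/
def gmet {n : ℕ} (L : (Fin n → ℝ) → ℝ) (y : Fin n → ℝ) (i j : Fin n) : ℝ :=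
  (1 / 2) * pdi (pdi (fun w => (L w) ^ 2) i) j y

/-- Normalized supporting element l_i = ∂L/∂yⁱ. -/
def lvec {n : ℕ} (L : (Fin n → ℝ) → ℝ) (y : Fin n → ℝ) (i : Fin n) : ℝ := pdi L i y

/-- y_i = g_{ij}·yʲ. -/
def ylow {n : ℕ} (L : (Fin n → ℝ) → ℝ) (y : Fin n → ℝ) (i : Fin n) : ℝ :=
  ∑ j, gmet L y i j * y j

/-- Angular metric tensor h_{ij} = g_{ij} − l_i·l_j. -/
def hmet {n : ℕ} (L : (Fin n → ℝ) → ℝ) (y : Fin n → ℝ) (i j : Fin n) : ℝ :=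
  gmet L y i j - lvec L y i * lvec L y j

/-- Cartan tensor C_{ijk} = (1/4)·∂³(L²)/∂yⁱ∂yʲ∂yᵏ. -/
def cartan {n : ℕ} (L : (Fin n → ℝ) → ℝ) (y : Fin n → ℝ) (i j k : Fin n) : ℝ :=
  (1 / 4) * pdi (pdi (pdi (fun w => (L w) ^ 2) i) j) k y

/-- β(y) = b_i·yⁱ. -/
def betaf {n : ℕ} (b : Fin n → ℝ) (y : Fin n → ℝ) : ℝ := ∑ i, b i * y i

/-- m_i = b_i − (β/L²)·y_i. -/
def mvec {n : ℕ} (L : (Fin n → ℝ) → ℝ) (b : Fin n → ℝ) (y : Fin n → ℝ) (i : Fin n) : ℝ :=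
  b i - (betaf b y / (L y) ^ 2) * ylow L y i

/-- The evaluation point (e^σ·L(y), β(y)). -/
def basept {n : ℕ} (L : (Fin n → ℝ) → ℝ) (b : Fin n → ℝ) (σ : ℝ) (y : Fin n → ℝ) : ℝ × ℝ :=
  (Real.exp σ * L y, betaf b y)

/-- q = f·f₂ evaluated at (e^σ·L(y), β(y)). -/
def qfun {n : ℕ} (f : ℝ × ℝ → ℝ) (L : (Fin n → ℝ) → ℝ) (b : Fin n → ℝ) (σ : ℝ)
    (y : Fin n → ℝ) : ℝ :=
  f (basept L b σ y) * pdt f (basept L b σ y)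

/-- p = f·f₁/L evaluated at (e^σ·L(y), β(y)). -/
def pfun {n : ℕ} (f : ℝ × ℝ → ℝ) (L : (Fin n → ℝ) → ℝ) (b : Fin n → ℝ) (σ : ℝ)
    (y : Fin n → ℝ) : ℝ :=
  f (basept L b σ y) * pds f (basept L b σ y) / L y

/-- q₀ = f·f₂₂ evaluated at (e^σ·L(y), β(y)). -/
def q0fun {n : ℕ} (f : ℝ × ℝ → ℝ) (L : (Fin n → ℝ) → ℝ) (b : Fin n → ℝ) (σ : ℝ)
    (y : Fin n → ℝ) : ℝ :=
  f (basept L b σ y) * pdt (pdt f) (basept L b σ y)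

/-- p₀ = f₂² + q₀ evaluated at (e^σ·L(y), β(y)). -/
def p0fun {n : ℕ} (f : ℝ × ℝ → ℝ) (L : (Fin n → ℝ) → ℝ) (b : Fin n → ℝ) (σ : ℝ)
    (y : Fin n → ℝ) : ℝ :=
  (pdt f (basept L b σ y)) ^ 2 + q0fun f L b σ y

/-- q₋₁ = f·f₁₂/L evaluated at (e^σ·L(y), β(y)). -/
def qm1fun {n : ℕ} (f : ℝ × ℝ → ℝ) (L : (Fin n → ℝ) → ℝ) (b : Fin n → ℝ) (σ : ℝ)
    (y : Fin n → ℝ) : ℝ :=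
  f (basept L b σ y) * pdt (pds f) (basept L b σ y) / L y

/-- p₋₁ = q₋₁ + p·f₂/f evaluated at (e^σ·L(y), β(y)). -/
def pm1fun {n : ℕ} (f : ℝ × ℝ → ℝ) (L : (Fin n → ℝ) → ℝ) (b : Fin n → ℝ) (σ : ℝ)
    (y : Fin n → ℝ) : ℝ :=
  qm1fun f L b σ y + pfun f L b σ y * pdt f (basept L b σ y) / f (basept L b σ y)

/-- q₋₂ = f·(e^σ·f₁₁ − f₁/L)/L² evaluated at (e^σ·L(y), β(y)). -/
def qm2fun {n : ℕ} (f : ℝ × ℝ → ℝ) (L : (Fin n → ℝ) → ℝ) (b : Fin n → ℝ) (σ : ℝ)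
    (y : Fin n → ℝ) : ℝ :=
  f (basept L b σ y) *
    (Real.exp σ * pds (pds f) (basept L b σ y) - pds f (basept L b σ y) / L y) / (L y) ^ 2

/-- p₋₂ = q₋₂ + e^σ·p²/f² evaluated at (e^σ·L(y), β(y)). -/
def pm2fun {n : ℕ} (f : ℝ × ℝ → ℝ) (L : (Fin n → ℝ) → ℝ) (b : Fin n → ℝ) (σ : ℝ)
    (y : Fin n → ℝ) : ℝ :=
  qm2fun f L b σ y + Real.exp σ * (pfun f L b σ y) ^ 2 / (f (basept L b σ y)) ^ 2

/-- p₀₂ = ∂(f₂² + f·f₂₂)/∂t evaluated at (e^σ·L(y), β(y)). -/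
def p02fun {n : ℕ} (f : ℝ × ℝ → ℝ) (L : (Fin n → ℝ) → ℝ) (b : Fin n → ℝ) (σ : ℝ)
    (y : Fin n → ℝ) : ℝ :=
  pdt (fun x => (pdt f x) ^ 2 + f x * pdt (pdt f) x) (basept L b σ y)

/-- The transformed Finsler function L̄(y) = f(e^σ·L(y), β(y)). -/
def Lbar {n : ℕ} (f : ℝ × ℝ → ℝ) (L : (Fin n → ℝ) → ℝ) (b : Fin n → ℝ) (σ : ℝ)
    (y : Fin n → ℝ) : ℝ :=
  f (basept L b σ y)

/-- bⁱ = g^{ij}·b_j. -/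
def bup {n : ℕ} (ginv : (Fin n → ℝ) → Fin n → Fin n → ℝ) (b : Fin n → ℝ)
    (y : Fin n → ℝ) (i : Fin n) : ℝ :=
  ∑ j, ginv y i j * b j

/-- b² = g^{ij}·b_i·b_j. -/
def bsq {n : ℕ} (ginv : (Fin n → ℝ) → Fin n → Fin n → ℝ) (b : Fin n → ℝ)
    (y : Fin n → ℝ) : ℝ :=
  ∑ i, ∑ j, ginv y i j * b i * b j

/-- m² = g^{ij}·m_i·m_j. -/
def msq {n : ℕ} (L : (Fin n → ℝ) → ℝ) (ginv : (Fin n → ℝ) → Fin n → Fin n → ℝ)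
    (b : Fin n → ℝ) (y : Fin n → ℝ) : ℝ :=
  ∑ i, ∑ j, ginv y i j * mvec L b y i * mvec L b y j

/-- mⁱ = g^{ij}·m_j. -/
def mup {n : ℕ} (L : (Fin n → ℝ) → ℝ) (ginv : (Fin n → ℝ) → Fin n → Fin n → ℝ)
    (b : Fin n → ℝ) (y : Fin n → ℝ) (i : Fin n) : ℝ :=
  ∑ j, ginv y i j * mvec L b y j

/-- hⁱ_j = g^{ir}·h_{rj}. -/
def hup {n : ℕ} (L : (Fin n → ℝ) → ℝ) (ginv : (Fin n → ℝ) → Fin n → Fin n → ℝ)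
    (y : Fin n → ℝ) (i j : Fin n) : ℝ :=
  ∑ r, ginv y i r * hmet L y r j

/-- ε = f²·(e^σ·p + m²·q₀)/L². -/
def epsfun {n : ℕ} (f : ℝ × ℝ → ℝ) (L : (Fin n → ℝ) → ℝ)
    (ginv : (Fin n → ℝ) → Fin n → Fin n → ℝ) (b : Fin n → ℝ) (σ : ℝ) (y : Fin n → ℝ) : ℝ :=
  (f (basept L b σ y)) ^ 2 *
    (Real.exp σ * pfun f L b σ y + msq L ginv b y * q0fun f L b σ y) / (L y) ^ 2

/-- s₀ = e^{−σ}·f²·q₀/(ε·p·L²). -/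
def s0fun {n : ℕ} (f : ℝ × ℝ → ℝ) (L : (Fin n → ℝ) → ℝ)
    (ginv : (Fin n → ℝ) → Fin n → Fin n → ℝ) (b : Fin n → ℝ) (σ : ℝ) (y : Fin n → ℝ) : ℝ :=
  Real.exp (-σ) * (f (basept L b σ y)) ^ 2 * q0fun f L b σ y /
    (epsfun f L ginv b σ y * pfun f L b σ y * (L y) ^ 2)

/-- s₋₁ = p₋₁·f²/(ε·p·L²). -/
def sm1fun {n : ℕ} (f : ℝ × ℝ → ℝ) (L : (Fin n → ℝ) → ℝ)
    (ginv : (Fin n → ℝ) → Fin n → Fin n → ℝ) (b : Fin n → ℝ) (σ : ℝ) (y : Fin n → ℝ) : ℝ :=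
  pm1fun f L b σ y * (f (basept L b σ y)) ^ 2 /
    (epsfun f L ginv b σ y * pfun f L b σ y * (L y) ^ 2)

/-- s₋₂ = p₋₁·(e^σ·m²·p·L² − b²·f²)/(ε·p·β·L²). -/
def sm2fun {n : ℕ} (f : ℝ × ℝ → ℝ) (L : (Fin n → ℝ) → ℝ)
    (ginv : (Fin n → ℝ) → Fin n → Fin n → ℝ) (b : Fin n → ℝ) (σ : ℝ) (y : Fin n → ℝ) : ℝ :=
  pm1fun f L b σ y *
    (Real.exp σ * msq L ginv b y * pfun f L b σ y * (L y) ^ 2 -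
      bsq ginv b y * (f (basept L b σ y)) ^ 2) /
    (epsfun f L ginv b σ y * pfun f L b σ y * betaf b y * (L y) ^ 2)

/-- ḡ^{ij} = (e^{−σ}/p)·g^{ij} − s₀·bⁱ·bʲ − s₋₁·(yⁱ·bʲ + yʲ·bⁱ) − s₋₂·yⁱ·yʲ. -/
def gbarinv {n : ℕ} (f : ℝ × ℝ → ℝ) (L : (Fin n → ℝ) → ℝ)
    (ginv : (Fin n → ℝ) → Fin n → Fin n → ℝ) (b : Fin n → ℝ) (σ : ℝ) (y : Fin n → ℝ)
    (i j : Fin n) : ℝ :=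
  (Real.exp (-σ) / pfun f L b σ y) * ginv y i j
    - s0fun f L ginv b σ y * bup ginv b y i * bup ginv b y j
    - sm1fun f L ginv b σ y * (y i * bup ginv b y j + y j * bup ginv b y i)
    - sm2fun f L ginv b σ y * y i * y j



section Helpers
variable {E : Type*} [NormedAddCommGroup E] [NormedSpace ℝ E]

lemma clm_prod_apply (T : ℝ × ℝ →L[ℝ] ℝ) (a c : ℝ) : T (a, c) = a * T (1, 0) + c * T (0, 1) := by
  have h : (a, c) = a • ((1:ℝ), (0:ℝ)) + c • ((0:ℝ), (1:ℝ)) := by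
    simp [Prod.ext_iff]
  rw [h, map_add, map_smul, map_smul, smul_eq_mul, smul_eq_mul]

lemma clm_pi_apply (T : (Fin n → ℝ) →L[ℝ] ℝ) (y : Fin n → ℝ) :
    T y = ∑ k, y k * T (Pi.single k 1) := by
  have h : y = ∑ k, y k • (Pi.single k 1 : Fin n → ℝ) := by
    funext x
    simp [Finset.sum_apply, Pi.single_apply]
  conv_lhs => rw [h]
  rw [map_sum]
  simp [map_smul, smul_eq_mul]

/-- Euler: degree-one positively homogeneous differentiable function. -/
lemma euler_one {Ω : Set E} (hO : IsOpen Ω) {F : E → ℝ}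
    (hhom : ∀ lam : ℝ, 0 < lam → ∀ w ∈ Ω, F (lam • w) = lam * F w)
    {y : E} (hy : y ∈ Ω) (hd : DifferentiableAt ℝ F y) :
    fderiv ℝ F y y = F y := by
  have hc : HasDerivAt (fun t : ℝ => t • y) y 1 := by
    simpa using (hasDerivAt_id (1:ℝ)).smul_const y
  have hcomp : HasDerivAt (fun t : ℝ => F (t • y)) (fderiv ℝ F y y) 1 := by
    have hd' : HasFDerivAt F (fderiv ℝ F y) ((1:ℝ) • y) := by
      simpa using hd.hasFDerivAt
    have := hd'.comp_hasDerivAt 1 hc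
    exact this
  have heq : (fun t : ℝ => F (t • y)) =ᶠ[nhds (1:ℝ)] fun t => t * F y := by
    filter_upwards [eventually_gt_nhds (by norm_num : (0:ℝ) < 1)] with t ht
    exact hhom t ht y hy
  have h2 : HasDerivAt (fun t : ℝ => t * F y) (fderiv ℝ F y y) 1 :=
    hcomp.congr_of_eventuallyEq heq.symm
  have h3 : HasDerivAt (fun t : ℝ => t * F y) (F y) 1 := by
    simpa using (hasDerivAt_id (1:ℝ)).mul_const (F y)
  exact h2.unique h3

/-- Euler: degree-zero positively homogeneous differentiable function. -/
lemma euler_zero {Ω : Set E} (hO : IsOpen Ω) {F : E → ℝ}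
    (hhom : ∀ lam : ℝ, 0 < lam → ∀ w ∈ Ω, F (lam • w) = F w)
    {y : E} (hy : y ∈ Ω) (hd : DifferentiableAt ℝ F y) :
    fderiv ℝ F y y = 0 := by
  have hc : HasDerivAt (fun t : ℝ => t • y) y 1 := by
    simpa using (hasDerivAt_id (1:ℝ)).smul_const y
  have hcomp : HasDerivAt (fun t : ℝ => F (t • y)) (fderiv ℝ F y y) 1 := by
    have hd' : HasFDerivAt F (fderiv ℝ F y) ((1:ℝ) • y) := by
      simpa using hd.hasFDerivAt
    have := hd'.comp_hasDerivAt 1 hc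
    exact this
  have heq : (fun t : ℝ => F (t • y)) =ᶠ[nhds (1:ℝ)] fun _ => F y := by
    filter_upwards [eventually_gt_nhds (by norm_num : (0:ℝ) < 1)] with t ht
    exact hhom t ht y hy
  have h2 : HasDerivAt (fun _ : ℝ => F y) (fderiv ℝ F y y) 1 :=
    hcomp.congr_of_eventuallyEq heq.symm
  have h3 : HasDerivAt (fun _ : ℝ => F y) 0 1 := hasDerivAt_const 1 (F y)
  exact h2.unique h3

/-- first derivative of a deg-1 homogeneous function is deg-0 homogeneous. -/
lemma fderiv_homog {Ω : Set E} (hO : IsOpen Ω)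
    (hcone : ∀ lam : ℝ, 0 < lam → ∀ w ∈ Ω, lam • w ∈ Ω) {F : E → ℝ}
    (hd : ∀ w ∈ Ω, DifferentiableAt ℝ F w)
    (hhom : ∀ lam : ℝ, 0 < lam → ∀ w ∈ Ω, F (lam • w) = lam * F w)
    (lam : ℝ) (hlam : 0 < lam) {w : E} (hw : w ∈ Ω) (v : E) :
    fderiv ℝ F (lam • w) v = fderiv ℝ F w v := by
  have hmem : lam • w ∈ Ω := hcone lam hlam w hw
  have heq : (fun u => F (lam • u)) =ᶠ[nhds w] fun u => lam * F u := by
    filter_upwards [hO.mem_nhds hw] with u hu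
    exact hhom lam hlam u hu
  have h1 : fderiv ℝ (fun u => F (lam • u)) w v = lam * fderiv ℝ F (lam • w) v := by
    have hsm : HasFDerivAt (fun u : E => lam • u) (lam • ContinuousLinearMap.id ℝ E) w := by
      exact ((ContinuousLinearMap.id ℝ E).hasFDerivAt (x := w)).const_smul lam
    have hm : HasFDerivAt F (fderiv ℝ F (lam • w)) ((lam • ContinuousLinearMap.id ℝ E) w) := by
      simpa using (hd _ hmem).hasFDerivAt
    have hcomp : HasFDerivAt (fun u => F (lam • u))
        ((fderiv ℝ F (lam • w)).comp (lam • ContinuousLinearMap.id ℝ E)) w := hm.comp w hsm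
    rw [hcomp.fderiv]
    simp [smul_eq_mul, map_smul]
  have h2 : fderiv ℝ (fun u => lam * F u) w v = lam * fderiv ℝ F w v := by
    rw [fderiv_const_mul (hd w hw)]; simp
  have := heq.fderiv_eq (𝕜 := ℝ)
  rw [this] at h1
  rw [h2] at h1
  exact (mul_left_cancel₀ (ne_of_gt hlam) h1).symm

/-- Second derivative in two directions, with symmetry. -/
lemma fderiv_fderiv_symm {Ω : Set E} (hO : IsOpen Ω) {F : E → ℝ}
    (hF : ContDiffOn ℝ (⊤ : ℕ∞) F Ω) {y : E} (hy : y ∈ Ω) (u v : E) :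
    fderiv ℝ (fun w => fderiv ℝ F w v) y u = fderiv ℝ (fun w => fderiv ℝ F w u) y v := by
  have hat : ContDiffAt ℝ (⊤ : ℕ∞) F y := hF.contDiffAt (hO.mem_nhds hy)
  have hd : DifferentiableAt ℝ (fderiv ℝ F) y :=
    (hat.fderiv_right (m := 1) (WithTop.coe_le_coe.mpr le_top)).differentiableAt one_ne_zero
  have key : ∀ a b : E, fderiv ℝ (fun w => fderiv ℝ F w a) y b
      = fderiv ℝ (fderiv ℝ F) y b a := by
    intro a b
    rw [fderiv_clm_apply hd (differentiableAt_const a)]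
    simp
  rw [key v u, key u v]
  have hsymm : IsSymmSndFDerivAt ℝ F y := hat.isSymmSndFDerivAt (by rw [minSmoothness_of_isRCLikeNormedField]; exact WithTop.coe_le_coe.mpr le_top)
  exact hsymm.eq u v
end Helpers


open scoped ContDiff

section PdiLemmas
variable {n : ℕ} {F G : (Fin n → ℝ) → ℝ} {y : Fin n → ℝ} {i : Fin n}

lemma pdi_congr (h : F =ᶠ[nhds y] G) (i : Fin n) : pdi F i y = pdi G i y := by
  unfold pdi; rw [Filter.EventuallyEq.fderiv_eq h]

lemma pdi_mul (hF : DifferentiableAt ℝ F y) (hG : DifferentiableAt ℝ G y) :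
    pdi (fun w => F w * G w) i y = pdi F i y * G y + F y * pdi G i y := by
  unfold pdi
  rw [fderiv_fun_mul hF hG]
  simp [smul_eq_mul]
  ring

lemma pdi_add (hF : DifferentiableAt ℝ F y) (hG : DifferentiableAt ℝ G y) :
    pdi (fun w => F w + G w) i y = pdi F i y + pdi G i y := by
  unfold pdi
  rw [fderiv_fun_add hF hG]
  simp

lemma pdi_const_mul (c : ℝ) (hF : DifferentiableAt ℝ F y) :
    pdi (fun w => c * F w) i y = c * pdi F i y := by
  unfold pdi
  rw [fderiv_const_mul hF]
  simp

/-- betaf as a continuous linear map. -/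
def betaclm (b : Fin n → ℝ) : (Fin n → ℝ) →L[ℝ] ℝ :=
  ∑ k, b k • (ContinuousLinearMap.proj k : (Fin n → ℝ) →L[ℝ] ℝ)

lemma betaclm_apply (b w : Fin n → ℝ) : betaclm b w = betaf b w := by
  simp [betaclm, betaf, ContinuousLinearMap.sum_apply]

lemma betaf_eq_clm (b : Fin n → ℝ) : betaf b = fun w => betaclm b w := by
  funext w; rw [betaclm_apply]

lemma hasFDerivAt_betaf (b : Fin n → ℝ) (y : Fin n → ℝ) :
    HasFDerivAt (betaf b) (betaclm b) y := by
  rw [betaf_eq_clm b]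
  exact (betaclm b).hasFDerivAt

lemma betaclm_single (b : Fin n → ℝ) (i : Fin n) : betaclm b (Pi.single i 1) = b i := by
  rw [betaclm_apply]; simp [betaf, Pi.single_apply]

/-- Chain rule through the base point map. -/
lemma pdi_comp_basept {L : (Fin n → ℝ) → ℝ} {b : Fin n → ℝ} {σ : ℝ} {g : ℝ × ℝ → ℝ}
    {w : Fin n → ℝ} (hL : DifferentiableAt ℝ L w)
    (hg : DifferentiableAt ℝ g (basept L b σ w)) (i : Fin n) :
    pdi (fun u => g (basept L b σ u)) i w =
      Real.exp σ * pdi L i w * pds g (basept L b σ w) + b i * pdt g (basept L b σ w) := by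
  have h1 : HasFDerivAt (fun u => Real.exp σ * L u) (Real.exp σ • fderiv ℝ L w) w :=
    hL.hasFDerivAt.const_smul (Real.exp σ)
  have hpt : HasFDerivAt (basept L b σ)
      ((Real.exp σ • fderiv ℝ L w).prod (betaclm b)) w :=
    h1.prodMk (hasFDerivAt_betaf b w)
  have hcomp : HasFDerivAt (fun u => g (basept L b σ u))
      ((fderiv ℝ g (basept L b σ w)).comp
        ((Real.exp σ • fderiv ℝ L w).prod (betaclm b))) w :=
    hg.hasFDerivAt.comp w hpt
  show fderiv ℝ (fun u => g (basept L b σ u)) w (Pi.single i 1) = _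
  rw [hcomp.fderiv]
  rw [ContinuousLinearMap.comp_apply, ContinuousLinearMap.prod_apply]
  rw [ContinuousLinearMap.smul_apply, betaclm_single]
  rw [clm_prod_apply]
  rfl

/-- directional derivative of a smooth function is smooth. -/
lemma dirderiv_smooth {E : Type*} [NormedAddCommGroup E] [NormedSpace ℝ E]
    {s : Set E} (hs : IsOpen s) {F : E → ℝ} (hF : ContDiffOn ℝ ∞ F s) (v : E) :
    ContDiffOn ℝ ∞ (fun x => fderiv ℝ F x v) s :=
  (hF.fderiv_of_isOpen hs (le_of_eq rfl)).clm_apply contDiffOn_const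

end PdiLemmas

section Structural
variable {n : ℕ}

lemma pdi_smooth {Ω : Set (Fin n → ℝ)} (hO : IsOpen Ω) {M : (Fin n → ℝ) → ℝ}
    (hM : ContDiffOn ℝ ∞ M Ω) (i : Fin n) : ContDiffOn ℝ ∞ (pdi M i) Ω :=
  dirderiv_smooth hO hM (Pi.single i 1)

lemma pdi_diffAt {Ω : Set (Fin n → ℝ)} (hO : IsOpen Ω) {M : (Fin n → ℝ) → ℝ}
    (hM : ContDiffOn ℝ ∞ M Ω) (i : Fin n) {y : Fin n → ℝ} (hy : y ∈ Ω) :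
    DifferentiableAt ℝ (pdi M i) y :=
  ((pdi_smooth hO hM i).contDiffAt (hO.mem_nhds hy)).differentiableAt (by norm_num)

lemma diffAt_of_smooth {Ω : Set (Fin n → ℝ)} (hO : IsOpen Ω) {M : (Fin n → ℝ) → ℝ}
    (hM : ContDiffOn ℝ ∞ M Ω) {y : Fin n → ℝ} (hy : y ∈ Ω) :
    DifferentiableAt ℝ M y :=
  (hM.contDiffAt (hO.mem_nhds hy)).differentiableAt (by norm_num)

/-- g_{ij} = l_i l_j + L·L_{ij} for any smooth function. -/
lemma gmet_eq {Ω : Set (Fin n → ℝ)} (hO : IsOpen Ω) {M : (Fin n → ℝ) → ℝ}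
    (hM : ContDiffOn ℝ ∞ M Ω) {y : Fin n → ℝ} (hy : y ∈ Ω) (i j : Fin n) :
    gmet M y i j = pdi M i y * pdi M j y + M y * pdi (pdi M i) j y := by
  have hMd : ∀ w ∈ Ω, DifferentiableAt ℝ M w := fun w hw => diffAt_of_smooth hO hM hw
  have h1 : ∀ w ∈ Ω, pdi (fun u => (M u) ^ 2) i w = 2 * (M w * pdi M i w) := by
    intro w hw
    have : (fun u => (M u) ^ 2) = fun u => M u * M u := by funext u; ring
    rw [this, pdi_mul (hMd w hw) (hMd w hw)]
    ring
  have heq : (pdi (fun u => (M u) ^ 2) i) =ᶠ[nhds y] fun w => 2 * (M w * pdi M i w) := by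
    filter_upwards [hO.mem_nhds hy] with w hw
    exact h1 w hw
  unfold gmet
  rw [pdi_congr heq j, pdi_const_mul 2 ((hMd y hy).fun_mul (pdi_diffAt hO hM i hy)),
    pdi_mul (hMd y hy) (pdi_diffAt hO hM i hy)]
  ring

/-- symmetry of second pdi for smooth functions. -/
lemma pdi_pdi_comm {Ω : Set (Fin n → ℝ)} (hO : IsOpen Ω) {M : (Fin n → ℝ) → ℝ}
    (hM : ContDiffOn ℝ (⊤ : ℕ∞) M Ω) {y : Fin n → ℝ} (hy : y ∈ Ω) (i j : Fin n) :
    pdi (pdi M i) j y = pdi (pdi M j) i y :=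
  fderiv_fderiv_symm hO hM hy (Pi.single j 1) (Pi.single i 1)

/-- Euler's identity in pdi form. -/
lemma euler_pdi {M : (Fin n → ℝ) → ℝ}
    {y : Fin n → ℝ} (hd : DifferentiableAt ℝ M y) :
    ∑ k, y k * pdi M k y = fderiv ℝ M y y := (clm_pi_apply (fderiv ℝ M y) y).symm

/-- y_i = L·l_i on the cone. -/
lemma ylow_eq {Ω : Set (Fin n → ℝ)} (hO : IsOpen Ω)
    (hcone : ∀ lam : ℝ, 0 < lam → ∀ w ∈ Ω, lam • w ∈ Ω)
    {L : (Fin n → ℝ) → ℝ} (hL : ContDiffOn ℝ ∞ L Ω)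
    (hhom : ∀ lam : ℝ, 0 < lam → ∀ w ∈ Ω, L (lam • w) = lam * L w)
    {y : Fin n → ℝ} (hy : y ∈ Ω) (i : Fin n) :
    ylow L y i = L y * pdi L i y := by
  have hMd : ∀ w ∈ Ω, DifferentiableAt ℝ L w := fun w hw => diffAt_of_smooth hO hL hw
  have hE1 : fderiv ℝ L y y = L y := euler_one hO hhom hy (hMd y hy)
  have hE0 : fderiv ℝ (pdi L i) y y = 0 := by
    apply euler_zero hO (F := pdi L i) _ hy (pdi_diffAt hO hL i hy)
    intro lam hlam w hw
    exact fderiv_homog hO hcone hMd hhom lam hlam hw (Pi.single i 1)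
  have hsum1 : ∑ k, y k * pdi L k y = L y := by rw [euler_pdi (hMd y hy), hE1]
  have hsum0 : ∑ k, y k * pdi (pdi L i) k y = 0 := by
    rw [euler_pdi (pdi_diffAt hO hL i hy), hE0]
  unfold ylow
  calc ∑ k, gmet L y i k * y k
      = ∑ k, (pdi L i y * pdi L k y + L y * pdi (pdi L i) k y) * y k := by
        refine Finset.sum_congr rfl fun k _ => ?_
        rw [gmet_eq hO hL hy i k]
    _ = pdi L i y * (∑ k, y k * pdi L k y) + L y * (∑ k, y k * pdi (pdi L i) k y) := by
        rw [Finset.mul_sum, Finset.mul_sum, ← Finset.sum_add_distrib]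
        exact Finset.sum_congr rfl fun k _ => by ring
    _ = L y * pdi L i y := by rw [hsum1, hsum0]; ring
end Structural

section Fside

lemma hUopen : IsOpen {x : ℝ × ℝ | 0 < x.1} := isOpen_lt continuous_const continuous_fst

lemma hUcone : ∀ lam : ℝ, 0 < lam → ∀ w ∈ {x : ℝ × ℝ | 0 < x.1}, lam • w ∈ {x : ℝ × ℝ | 0 < x.1} := by
  intro lam hlam w hw
  simp only [Set.mem_setOf_eq] at *
  have : (lam • w).1 = lam * w.1 := rfl
  rw [this]
  exact mul_pos hlam hw

lemma fhom' {f : ℝ × ℝ → ℝ}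
    (hfhom : ∀ lam : ℝ, 0 < lam → ∀ x : ℝ × ℝ, 0 < x.1 → f (lam * x.1, lam * x.2) = lam * f x) :
    ∀ lam : ℝ, 0 < lam → ∀ w ∈ {x : ℝ × ℝ | 0 < x.1}, f (lam • w) = lam * f w := by
  intro lam hlam w hw
  have : lam • w = (lam * w.1, lam * w.2) := rfl
  rw [this]
  exact hfhom lam hlam w hw

/-- decomposition of a full directional derivative on ℝ×ℝ. -/
lemma fderiv_prod_decomp {g : ℝ × ℝ → ℝ} {x₀ : ℝ × ℝ} :
    fderiv ℝ g x₀ x₀ = x₀.1 * pds g x₀ + x₀.2 * pdt g x₀ := by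
  conv_lhs => rw [show x₀ = (x₀.1, x₀.2) from rfl]
  exact clm_prod_apply (fderiv ℝ g x₀) x₀.1 x₀.2

lemma euler_f {f : ℝ × ℝ → ℝ} (hf : ContDiffOn ℝ (⊤ : ℕ∞) f {x : ℝ × ℝ | 0 < x.1})
    (hfhom : ∀ lam : ℝ, 0 < lam → ∀ x : ℝ × ℝ, 0 < x.1 → f (lam * x.1, lam * x.2) = lam * f x)
    {x₀ : ℝ × ℝ} (hx : 0 < x₀.1) :
    x₀.1 * pds f x₀ + x₀.2 * pdt f x₀ = f x₀ := by
  have hd : DifferentiableAt ℝ f x₀ :=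
    (hf.contDiffAt (hUopen.mem_nhds hx)).differentiableAt (by norm_num)
  rw [← fderiv_prod_decomp]
  exact euler_one hUopen (fhom' hfhom) hx hd

lemma euler_f2 {f : ℝ × ℝ → ℝ} (hf : ContDiffOn ℝ (⊤ : ℕ∞) f {x : ℝ × ℝ | 0 < x.1})
    (hfhom : ∀ lam : ℝ, 0 < lam → ∀ x : ℝ × ℝ, 0 < x.1 → f (lam * x.1, lam * x.2) = lam * f x)
    {x₀ : ℝ × ℝ} (hx : 0 < x₀.1) (v : ℝ × ℝ) :
    x₀.1 * pds (fun x => fderiv ℝ f x v) x₀ + x₀.2 * pdt (fun x => fderiv ℝ f x v) x₀ = 0 := by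
  have hfd : ∀ w ∈ {x : ℝ × ℝ | 0 < x.1}, DifferentiableAt ℝ f w := fun w hw =>
    (hf.contDiffAt (hUopen.mem_nhds hw)).differentiableAt (by norm_num)
  have hG : DifferentiableAt ℝ (fun x => fderiv ℝ f x v) x₀ :=
    ((dirderiv_smooth hUopen (hf.of_le (by simp)) v).contDiffAt
      (hUopen.mem_nhds hx)).differentiableAt (by norm_num)
  rw [← fderiv_prod_decomp]
  apply euler_zero hUopen (F := fun x => fderiv ℝ f x v) _ hx hG
  intro lam hlam w hw
  exact fderiv_homog hUopen hUcone hfd (fhom' hfhom) lam hlam hw v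

lemma schwarz_f {f : ℝ × ℝ → ℝ} (hf : ContDiffOn ℝ (⊤ : ℕ∞) f {x : ℝ × ℝ | 0 < x.1})
    {x₀ : ℝ × ℝ} (hx : 0 < x₀.1) :
    pds (pdt f) x₀ = pdt (pds f) x₀ :=
  fderiv_fderiv_symm hUopen hf hx ((1:ℝ), (0:ℝ)) ((0:ℝ), (1:ℝ))

end Fside

section MetricFormula
variable {n : ℕ}

lemma metric_formula {Ω : Set (Fin n → ℝ)} (hΩopen : IsOpen Ω)
    (hΩcone : ∀ lam : ℝ, 0 < lam → ∀ y ∈ Ω, lam • y ∈ Ω)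
    {L : (Fin n → ℝ) → ℝ} (hLsmooth : ContDiffOn ℝ (⊤ : ℕ∞) L Ω)
    (hLpos : ∀ y ∈ Ω, 0 < L y)
    (hLhom : ∀ lam : ℝ, 0 < lam → ∀ y ∈ Ω, L (lam • y) = lam * L y)
    (b : Fin n → ℝ) (σ : ℝ) {f : ℝ × ℝ → ℝ}
    (hf : ContDiffOn ℝ (⊤ : ℕ∞) f {x : ℝ × ℝ | 0 < x.1})
    (hfpos : ∀ x : ℝ × ℝ, 0 < x.1 → 0 < f x)
    (hfhom : ∀ lam : ℝ, 0 < lam → ∀ x : ℝ × ℝ, 0 < x.1 → f (lam * x.1, lam * x.2) = lam * f x)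
    {y : Fin n → ℝ} (hy : y ∈ Ω) (i j : Fin n) :
    gmet (Lbar f L b σ) y i j
      = Real.exp σ * pfun f L b σ y * gmet L y i j
      + p0fun f L b σ y * (b i * b j)
      + Real.exp σ * pm1fun f L b σ y * (ylow L y i * b j + ylow L y j * b i)
      + Real.exp σ * pm2fun f L b σ y * (ylow L y i * ylow L y j) := by
  have hLss : ContDiffOn ℝ ∞ L Ω := hLsmooth.of_le (by simp)
  have hfss : ContDiffOn ℝ ∞ f {x : ℝ × ℝ | 0 < x.1} := hf.of_le (by simp)
  have hbmem : ∀ w ∈ Ω, basept L b σ w ∈ {x : ℝ × ℝ | 0 < x.1} := by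
    intro w hw
    exact mul_pos (Real.exp_pos σ) (hLpos w hw)
  have hLd : ∀ w ∈ Ω, DifferentiableAt ℝ L w := fun w hw => diffAt_of_smooth hΩopen hLss hw
  have hbd : ∀ w ∈ Ω, DifferentiableAt ℝ (basept L b σ) w := by
    intro w hw
    have h1 : HasFDerivAt (fun u => Real.exp σ * L u)
        (Real.exp σ • fderiv ℝ L w) w := (hLd w hw).hasFDerivAt.const_smul (Real.exp σ)
    exact (h1.prodMk (hasFDerivAt_betaf b w)).differentiableAt
  -- smoothness of partial derivatives of f on U
  have hpds : ContDiffOn ℝ ∞ (pds f) {x : ℝ × ℝ | 0 < x.1} :=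
    dirderiv_smooth hUopen hfss ((1:ℝ), (0:ℝ))
  have hpdt : ContDiffOn ℝ ∞ (pdt f) {x : ℝ × ℝ | 0 < x.1} :=
    dirderiv_smooth hUopen hfss ((0:ℝ), (1:ℝ))
  have hgdiff : ∀ g : ℝ × ℝ → ℝ, ContDiffOn ℝ ∞ g {x : ℝ × ℝ | 0 < x.1} →
      ∀ w ∈ Ω, DifferentiableAt ℝ (fun u => g (basept L b σ u)) w := by
    intro g hg w hw
    exact ((hg.contDiffAt (hUopen.mem_nhds (hbmem w hw))).differentiableAt
      (by norm_num)).comp w (hbd w hw)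
  -- smoothness of Lbar
  have hbase_smooth : ContDiffOn ℝ ∞ (basept L b σ) Ω := by
    have h2 : ContDiffOn ℝ ∞ (betaf b) Ω := by
      rw [betaf_eq_clm b]; exact (betaclm b).contDiff.contDiffOn
    exact (contDiffOn_const.mul hLss).prodMk h2
  have hLbar_smooth : ContDiffOn ℝ ∞ (Lbar f L b σ) Ω :=
    ContDiffOn.comp hfss hbase_smooth hbmem
  -- first derivative of Lbar on Ω
  have hd1 : ∀ k : Fin n, ∀ w ∈ Ω, pdi (Lbar f L b σ) k w =
      Real.exp σ * pdi L k w * pds f (basept L b σ w) + b k * pdt f (basept L b σ w) := by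
    intro k w hw
    exact pdi_comp_basept (hLd w hw)
      ((hfss.contDiffAt (hUopen.mem_nhds (hbmem w hw))).differentiableAt (by norm_num)) k
  -- second derivative of Lbar at y
  have heq : (pdi (Lbar f L b σ) i) =ᶠ[nhds y] fun w =>
      Real.exp σ * pdi L i w * pds f (basept L b σ w) + b i * pdt f (basept L b σ w) := by
    filter_upwards [hΩopen.mem_nhds hy] with w hw
    exact hd1 i w hw
  have hdprodL : DifferentiableAt ℝ (fun w => Real.exp σ * pdi L i w) y :=
    (pdi_diffAt hΩopen hLss i hy).const_mul _
  have hdF1 : DifferentiableAt ℝ (fun w => pds f (basept L b σ w)) y :=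
    hgdiff (pds f) hpds y hy
  have hdF2 : DifferentiableAt ℝ (fun w => pdt f (basept L b σ w)) y :=
    hgdiff (pdt f) hpdt y hy
  have hsecond : pdi (pdi (Lbar f L b σ) i) j y =
      Real.exp σ * pdi (pdi L i) j y * pds f (basept L b σ y)
      + Real.exp σ * pdi L i y *
          (Real.exp σ * pdi L j y * pds (pds f) (basept L b σ y)
            + b j * pdt (pds f) (basept L b σ y))
      + b i * (Real.exp σ * pdi L j y * pds (pdt f) (basept L b σ y)
            + b j * pdt (pdt f) (basept L b σ y)) := by
    rw [pdi_congr heq j]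
    have e1 : pdi (fun w => Real.exp σ * pdi L i w * pds f (basept L b σ w)
        + b i * pdt f (basept L b σ w)) j y
        = pdi (fun w => Real.exp σ * pdi L i w * pds f (basept L b σ w)) j y
          + pdi (fun w => b i * pdt f (basept L b σ w)) j y :=
      pdi_add (hdprodL.mul hdF1) ((hdF2.const_mul _))
    rw [e1, pdi_mul hdprodL hdF1, pdi_const_mul _ hdF2,
      pdi_const_mul _ (pdi_diffAt hΩopen hLss i hy),
      pdi_comp_basept (hLd y hy)
        ((hpds.contDiffAt (hUopen.mem_nhds (hbmem y hy))).differentiableAt (by norm_num)) j,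
      pdi_comp_basept (hLd y hy)
        ((hpdt.contDiffAt (hUopen.mem_nhds (hbmem y hy))).differentiableAt (by norm_num)) j]
  -- assemble
  have hgLbar := gmet_eq hΩopen hLbar_smooth hy i j
  have hgL := gmet_eq hΩopen hLss hy i j
  have hyl_i := ylow_eq hΩopen hΩcone hLss hLhom hy i
  have hyl_j := ylow_eq hΩopen hΩcone hLss hLhom hy j
  have hswz : pds (pdt f) (basept L b σ y) = pdt (pds f) (basept L b σ y) :=
    schwarz_f hf (hbmem y hy)
  have hLne : L y ≠ 0 := ne_of_gt (hLpos y hy)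
  have hFpos : 0 < f (basept L b σ y) := hfpos _ (hbmem y hy)
  have hFne : f (basept L b σ y) ≠ 0 := ne_of_gt hFpos
  rw [hgLbar, hsecond, hd1 i y hy, hd1 j y hy, hgL, hyl_i, hyl_j]
  show _ = _ * pfun f L b σ y * _ + p0fun f L b σ y * _ + _ * pm1fun f L b σ y * _
      + _ * pm2fun f L b σ y * _
  unfold pm1fun pm2fun p0fun qm1fun qm2fun q0fun pfun
  have hLbar_val : Lbar f L b σ y = f (basept L b σ y) := rfl
  rw [hLbar_val, hswz]
  field_simp
  ring
end MetricFormula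


section ScalarAlgebra

lemma sval0 (a F q0 P Lv X : ℝ) (hF : F ≠ 0) (hL : Lv ≠ 0) (hX : X ≠ 0) (hP : P ≠ 0) :
    a * F ^ 2 * q0 / (F ^ 2 * X / Lv ^ 2 * P * Lv ^ 2) = a * q0 / (X * P) := by
  field_simp

lemma sval1 (c F P Lv X : ℝ) (hF : F ≠ 0) (hL : Lv ≠ 0) (hX : X ≠ 0) (hP : P ≠ 0) :
    c * F ^ 2 / (F ^ 2 * X / Lv ^ 2 * P * Lv ^ 2) = c / (X * P) := by
  field_simp

lemma sval2 (c M F P B Lv X : ℝ) (hF : F ≠ 0) (hL : Lv ≠ 0) (hX : X ≠ 0) (hP : P ≠ 0)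
    (hB : B ≠ 0) :
    c * M / (F ^ 2 * X / Lv ^ 2 * P * B * Lv ^ 2) = c * M / (F ^ 2 * X * P * B) := by
  field_simp

set_option maxHeartbeats 1000000 in
lemma keys_scalar (E Lv B F F1 F11 M2 X P q0 P0 P1 P2 B2 s0 s1 s2 al : ℝ)
    (hE : E ≠ 0) (hL : Lv ≠ 0) (hB : B ≠ 0) (hF : F ≠ 0) (hF1 : F1 ≠ 0) (hX : X ≠ 0)
    (hXd : X = E * (F * F1 / Lv) + M2 * (F * (E ^ 2 * Lv ^ 2 * F11 / B ^ 2)))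
    (hPd : P = F * F1 / Lv)
    (hq0d : q0 = F * (E ^ 2 * Lv ^ 2 * F11 / B ^ 2))
    (hP0d : P0 = ((F - E * Lv * F1) / B) ^ 2 + F * (E ^ 2 * Lv ^ 2 * F11 / B ^ 2))
    (hP1d : P1 = F * (-(E * Lv * F11) / B) / Lv + F * F1 / Lv * ((F - E * Lv * F1) / B) / F)
    (hP2d : P2 = F * (E * F11 - F1 / Lv) / Lv ^ 2 + E * (F * F1 / Lv) ^ 2 / F ^ 2)
    (hB2d : B2 = M2 + B ^ 2 / Lv ^ 2)
    (hs0d : s0 = E⁻¹ * q0 / (X * P))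
    (hs1d : s1 = P1 / (X * P))
    (hs2d : s2 = P1 * (E * M2 * P * Lv ^ 2 - B2 * F ^ 2) / (F ^ 2 * X * P * B))
    (hald : al = E⁻¹ / P) :
    (al * P0 - s0 * (E * P + P0 * B2 + E * P1 * B) - s1 * (P0 * B + E * P1 * Lv ^ 2) = 0)
    ∧ (al * (E * P1) - s0 * (E * P1 * B2 + E * P2 * B)
        - s1 * (E * P + E * P1 * B + E * P2 * Lv ^ 2) = 0)
    ∧ (al * (E * P1) - s1 * (E * P + P0 * B2 + E * P1 * B)
        - s2 * (P0 * B + E * P1 * Lv ^ 2) = 0)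
    ∧ (al * (E * P2) - s1 * (E * P1 * B2 + E * P2 * B)
        - s2 * (E * P + E * P1 * B + E * P2 * Lv ^ 2) = 0) := by
  subst hPd hq0d hP0d hP1d hP2d hB2d hs0d hs1d hs2d hald
  refine ⟨?_, ?_, ?_, ?_⟩ <;>
  · field_simp
    rw [hXd]
    field_simp
    ring

end ScalarAlgebra

set_option maxHeartbeats 1600000 in
theorem stmt_15
    (n : ℕ) (Ω : Set (Fin n → ℝ)) (hΩopen : IsOpen Ω)
    (hΩ0 : ∀ y ∈ Ω, y ≠ 0)
    (hΩcone : ∀ lam : ℝ, 0 < lam → ∀ y ∈ Ω, lam • y ∈ Ω)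
    (L : (Fin n → ℝ) → ℝ)
    (hLsmooth : ContDiffOn ℝ (⊤ : ℕ∞) L Ω)
    (hLpos : ∀ y ∈ Ω, 0 < L y)
    (hLhom : ∀ lam : ℝ, 0 < lam → ∀ y ∈ Ω, L (lam • y) = lam * L y)
    (ginv : (Fin n → ℝ) → Fin n → Fin n → ℝ)
    (hginv : ∀ y ∈ Ω, ∀ i j : Fin n,
      ∑ r, ginv y i r * gmet L y r j = if i = j then (1 : ℝ) else 0)
    (hginv' : ∀ y ∈ Ω, ∀ i j : Fin n,
      ∑ r, gmet L y i r * ginv y r j = if i = j then (1 : ℝ) else 0)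
    (b : Fin n → ℝ) (σ : ℝ)
    (f : ℝ × ℝ → ℝ)
    (hf : ContDiffOn ℝ (⊤ : ℕ∞) f {x : ℝ × ℝ | 0 < x.1})
    (hfpos : ∀ x : ℝ × ℝ, 0 < x.1 → 0 < f x)
    (hfhom : ∀ lam : ℝ, 0 < lam → ∀ x : ℝ × ℝ, 0 < x.1 →
      f (lam * x.1, lam * x.2) = lam * f x)
    (hp : ∀ y ∈ Ω, pfun f L b σ y ≠ 0)
    (hβ : ∀ y ∈ Ω, betaf b y ≠ 0)
    (hε : ∀ y ∈ Ω, epsfun f L ginv b σ y ≠ 0)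
    :
    ∀ y ∈ Ω, ∀ i j : Fin n,
      ∑ r, gbarinv f L ginv b σ y i r * gmet (Lbar f L b σ) y r j
        = if i = j then (1 : ℝ) else 0 := by
  intro y hy
  have hLss : ContDiffOn ℝ ∞ L Ω := hLsmooth.of_le (by simp)
  have hLne : L y ≠ 0 := ne_of_gt (hLpos y hy)
  have hβne : betaf b y ≠ 0 := hβ y hy
  have hPne : pfun f L b σ y ≠ 0 := hp y hy
  have hεne : epsfun f L ginv b σ y ≠ 0 := hε y hy
  have hx0 : (0:ℝ) < (basept L b σ y).1 := mul_pos (Real.exp_pos σ) (hLpos y hy)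
  have hFpos : 0 < f (basept L b σ y) := hfpos _ hx0
  have hFne : f (basept L b σ y) ≠ 0 := ne_of_gt hFpos
  have hEne : Real.exp σ ≠ 0 := Real.exp_ne_zero σ
  -- metric formula for the transformed metric
  have hG : ∀ r s : Fin n, gmet (Lbar f L b σ) y r s
      = Real.exp σ * pfun f L b σ y * gmet L y r s
      + p0fun f L b σ y * (b r * b s)
      + Real.exp σ * pm1fun f L b σ y * (ylow L y r * b s + ylow L y s * b r)
      + Real.exp σ * pm2fun f L b σ y * (ylow L y r * ylow L y s) :=
    fun r s => metric_formula hΩopen hΩcone hLsmooth hLpos hLhom b σ hf hfpos hfhom hy r s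
  -- symmetry of g
  have gsym : ∀ r s : Fin n, gmet L y r s = gmet L y s r := by
    intro r s
    rw [gmet_eq hΩopen hLss hy r s, gmet_eq hΩopen hLss hy s r,
      pdi_pdi_comm hΩopen hLsmooth hy r s]
    ring
  -- symmetry of ginv
  have ginvsym : ∀ r s : Fin n, ginv y r s = ginv y s r := by
    intro r s
    have h1 : ginv y s r = ∑ k, ginv y s k * ∑ t, ginv y r t * gmet L y t k := by
      have : ∀ k, (∑ t, ginv y r t * gmet L y t k) = if r = k then (1:ℝ) else 0 :=
        fun k => hginv y hy r k
      simp only [this, mul_ite, mul_one, mul_zero]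
      rw [Finset.sum_ite_eq Finset.univ r (fun k => ginv y s k)]
      simp
    rw [h1]
    have h2 : ∀ k, ginv y s k * ∑ t, ginv y r t * gmet L y t k
        = ∑ t, ginv y r t * (ginv y s k * gmet L y t k) := by
      intro k
      rw [Finset.mul_sum]
      exact Finset.sum_congr rfl fun t _ => by ring
    simp only [h2]
    rw [Finset.sum_comm]
    have h3 : ∀ t, (∑ k, ginv y r t * (ginv y s k * gmet L y t k)) = ginv y r t * (if s = t then (1:ℝ) else 0) := by
      intro t
      rw [← Finset.mul_sum]
      congr 1
      calc ∑ k, ginv y s k * gmet L y t k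
          = ∑ k, ginv y s k * gmet L y k t := by
            exact Finset.sum_congr rfl fun k _ => by rw [gsym t k]
        _ = if s = t then (1:ℝ) else 0 := hginv y hy s t
    simp only [h3, mul_ite, mul_one, mul_zero]
    rw [Finset.sum_ite_eq Finset.univ s (fun t => ginv y r t)]
    simp
  -- Euler sum for L
  have hLd : DifferentiableAt ℝ L y := diffAt_of_smooth hΩopen hLss hy
  have hyl : ∀ k, ylow L y k = L y * pdi L k y :=
    fun k => ylow_eq hΩopen hΩcone hLss hLhom hy k
  have heulL : ∑ k, y k * pdi L k y = L y := by
    rw [euler_pdi hLd, euler_one hΩopen hLhom hy hLd]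
  -- contraction identities
  have T3 : ∀ i : Fin n, ∑ r, ginv y i r * ylow L y r = y i := by
    intro i
    have h1 : ∀ r, ginv y i r * ylow L y r = ∑ s, y s * (ginv y i r * gmet L y r s) := by
      intro r
      unfold ylow
      rw [Finset.mul_sum]
      exact Finset.sum_congr rfl fun s _ => by ring
    simp only [h1]
    rw [Finset.sum_comm]
    have h2 : ∀ s, (∑ r, y s * (ginv y i r * gmet L y r s)) = y s * (if i = s then (1:ℝ) else 0) := by
      intro s
      rw [← Finset.mul_sum, hginv y hy i s]
    simp only [h2, mul_ite, mul_one, mul_zero]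
    rw [Finset.sum_ite_eq Finset.univ i (fun s => y s)]
    simp
  have T4 : ∀ j : Fin n, ∑ r, bup ginv b y r * gmet L y r j = b j := by
    intro j
    have h1 : ∀ r, bup ginv b y r * gmet L y r j
        = ∑ s, b s * (ginv y s r * gmet L y r j) := by
      intro r
      unfold bup
      rw [Finset.sum_mul]
      exact Finset.sum_congr rfl fun s _ => by rw [ginvsym r s]; ring
    simp only [h1]
    rw [Finset.sum_comm]
    have h2 : ∀ s, (∑ r, b s * (ginv y s r * gmet L y r j)) = b s * (if s = j then (1:ℝ) else 0) := by
      intro s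
      rw [← Finset.mul_sum, hginv y hy s j]
    simp only [h2, mul_ite, mul_one, mul_zero]
    rw [Finset.sum_ite_eq' Finset.univ j (fun s => b s)]
    simp
  have T5 : ∑ r, bup ginv b y r * b r = bsq ginv b y := by
    unfold bup bsq
    exact Finset.sum_congr rfl fun r _ => by
      rw [Finset.sum_mul]
      exact Finset.sum_congr rfl fun s _ => by ring
  have T6 : ∑ r, bup ginv b y r * ylow L y r = betaf b y := by
    have h1 : ∀ r, bup ginv b y r * ylow L y r = ∑ s, b s * (ginv y s r * ylow L y r) := by
      intro r
      unfold bup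
      rw [Finset.sum_mul]
      exact Finset.sum_congr rfl fun s _ => by rw [ginvsym r s]; ring
    simp only [h1]
    rw [Finset.sum_comm]
    have h2 : ∀ s, (∑ r, b s * (ginv y s r * ylow L y r)) = b s * y s := by
      intro s
      rw [← Finset.mul_sum, T3 s]
    simp only [h2]
    rfl
  have T7 : ∀ j : Fin n, ∑ r, y r * gmet L y r j = ylow L y j := by
    intro j
    unfold ylow
    exact Finset.sum_congr rfl fun r _ => by rw [gsym r j]; ring
  have T8 : ∑ r, y r * b r = betaf b y := by
    unfold betaf
    exact Finset.sum_congr rfl fun r _ => by ring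
  have T9 : ∑ r, y r * ylow L y r = (L y) ^ 2 := by
    have h1 : ∀ r, y r * ylow L y r = L y * (y r * pdi L r y) := by
      intro r; rw [hyl r]; ring
    simp only [h1]
    rw [← Finset.mul_sum, heulL]
    ring
  -- m² = b² - β²/L²
  have hmsq : msq L ginv b y = bsq ginv b y - (betaf b y) ^ 2 / (L y) ^ 2 := by
    have hby : ∑ s, ∑ t, ginv y s t * b s * ylow L y t = betaf b y := by
      have h1 : ∀ s, (∑ t, ginv y s t * b s * ylow L y t) = b s * y s := by
        intro s
        rw [show (∑ t, ginv y s t * b s * ylow L y t) = b s * ∑ t, ginv y s t * ylow L y t by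
          rw [Finset.mul_sum]; exact Finset.sum_congr rfl fun t _ => by ring]
        rw [T3 s]
      simp only [h1]
      rfl
    have hyb : ∑ s, ∑ t, ginv y s t * ylow L y s * b t = betaf b y := by
      rw [Finset.sum_comm]
      have h1 : ∀ t, (∑ s, ginv y s t * ylow L y s * b t) = b t * y t := by
        intro t
        rw [show (∑ s, ginv y s t * ylow L y s * b t) = b t * ∑ s, ginv y t s * ylow L y s by
          rw [Finset.mul_sum]; exact Finset.sum_congr rfl fun s _ => by rw [ginvsym s t]; ring]
        rw [T3 t]
      simp only [h1]
      rfl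
    have hyy : ∑ s, ∑ t, ginv y s t * ylow L y s * ylow L y t = (L y) ^ 2 := by
      have h1 : ∀ s, (∑ t, ginv y s t * ylow L y s * ylow L y t) = ylow L y s * y s := by
        intro s
        rw [show (∑ t, ginv y s t * ylow L y s * ylow L y t)
            = ylow L y s * ∑ t, ginv y s t * ylow L y t by
          rw [Finset.mul_sum]; exact Finset.sum_congr rfl fun t _ => by ring]
        rw [T3 s]
      simp only [h1]
      rw [← T9]
      exact Finset.sum_congr rfl fun s _ => by ring
    unfold msq mvec
    have expand : ∀ s t : Fin n, ginv y s t
          * (b s - betaf b y / (L y) ^ 2 * ylow L y s)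
          * (b t - betaf b y / (L y) ^ 2 * ylow L y t)
        = ginv y s t * b s * b t
          - betaf b y / (L y) ^ 2 * (ginv y s t * b s * ylow L y t)
          - betaf b y / (L y) ^ 2 * (ginv y s t * ylow L y s * b t)
          + (betaf b y / (L y) ^ 2) ^ 2 * (ginv y s t * ylow L y s * ylow L y t) := by
      intro s t; ring
    simp only [expand, Finset.sum_add_distrib, Finset.sum_sub_distrib, ← Finset.mul_sum]
    rw [hby, hyb, hyy]
    unfold bsq
    field_simp
    ring
  -- Euler relations for f at the base point
  have hR1 : Real.exp σ * L y * pds f (basept L b σ y)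
      + betaf b y * pdt f (basept L b σ y) = f (basept L b σ y) := by
    have := euler_f hf hfhom hx0
    exact this
  have hR2 : Real.exp σ * L y * pds (pds f) (basept L b σ y)
      + betaf b y * pdt (pds f) (basept L b σ y) = 0 := by
    have := euler_f2 hf hfhom hx0 ((1:ℝ), (0:ℝ))
    exact this
  have hR3 : Real.exp σ * L y * pdt (pds f) (basept L b σ y)
      + betaf b y * pdt (pdt f) (basept L b σ y) = 0 := by
    have h := euler_f2 hf hfhom hx0 ((0:ℝ), (1:ℝ))
    have hs : pds (fun x => fderiv ℝ f x ((0:ℝ), (1:ℝ))) (basept L b σ y)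
        = pdt (pds f) (basept L b σ y) := schwarz_f hf hx0
    rw [hs] at h
    exact h
  -- solved forms
  have hF2v : pdt f (basept L b σ y)
      = (f (basept L b σ y) - Real.exp σ * L y * pds f (basept L b σ y)) / betaf b y := by
    field_simp
    linarith [hR1]
  have hF12v : pdt (pds f) (basept L b σ y)
      = -(Real.exp σ * L y * pds (pds f) (basept L b σ y)) / betaf b y := by
    field_simp
    linarith [hR2]
  have hF22v : pdt (pdt f) (basept L b σ y)
      = Real.exp σ ^ 2 * (L y) ^ 2 * pds (pds f) (basept L b σ y) / (betaf b y) ^ 2 := by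
    rw [hF12v] at hR3
    field_simp at hR3 ⊢
    linarith [hR3]

  have hmsq' : bsq ginv b y = msq L ginv b y + (betaf b y) ^ 2 / (L y) ^ 2 := by
    rw [hmsq]
    ring

  -- value lemmas
  have hF1ne : pds f (basept L b σ y) ≠ 0 := by
    intro h
    apply hPne
    show f (basept L b σ y) * pds f (basept L b σ y) / L y = 0
    rw [h]
    simp
  have hPv : pfun f L b σ y = f (basept L b σ y) * pds f (basept L b σ y) / L y := rfl
  have hq0v : q0fun f L b σ y = f (basept L b σ y) * (Real.exp σ ^ 2 * (L y) ^ 2 * pds (pds f) (basept L b σ y) / (betaf b y) ^ 2) := by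
    show f (basept L b σ y) * pdt (pdt f) (basept L b σ y) = _
    rw [hF22v]
  have hεval : epsfun f L ginv b σ y = (f (basept L b σ y)) ^ 2 * (Real.exp σ * pfun f L b σ y + msq L ginv b y * q0fun f L b σ y) / (L y) ^ 2 := rfl
  have hXAne : (Real.exp σ * pfun f L b σ y + msq L ginv b y * q0fun f L b σ y) ≠ 0 := by
    intro h
    apply hεne
    rw [hεval, h, mul_zero, zero_div]
  have hP0v : p0fun f L b σ y = ((f (basept L b σ y) - Real.exp σ * L y * pds f (basept L b σ y)) / betaf b y) ^ 2
      + f (basept L b σ y) * (Real.exp σ ^ 2 * (L y) ^ 2 * pds (pds f) (basept L b σ y) / (betaf b y) ^ 2) := by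
    show (pdt f (basept L b σ y)) ^ 2 + q0fun f L b σ y = _
    rw [hF2v, hq0v]
  have hP1v : pm1fun f L b σ y = f (basept L b σ y) * (-(Real.exp σ * L y * pds (pds f) (basept L b σ y)) / betaf b y) / L y
      + f (basept L b σ y) * pds f (basept L b σ y) / L y * ((f (basept L b σ y) - Real.exp σ * L y * pds f (basept L b σ y)) / betaf b y) / f (basept L b σ y) := by
    show f (basept L b σ y) * pdt (pds f) (basept L b σ y) / L y + pfun f L b σ y * pdt f (basept L b σ y) / f (basept L b σ y) = _
    rw [hF12v, hF2v, hPv]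
  have hP2v : pm2fun f L b σ y = f (basept L b σ y) * (Real.exp σ * pds (pds f) (basept L b σ y) - pds f (basept L b σ y) / L y) / (L y) ^ 2
      + Real.exp σ * (f (basept L b σ y) * pds f (basept L b σ y) / L y) ^ 2 / (f (basept L b σ y)) ^ 2 := rfl
  have hs0v : s0fun f L ginv b σ y = (Real.exp σ)⁻¹ * q0fun f L b σ y / ((Real.exp σ * pfun f L b σ y + msq L ginv b y * q0fun f L b σ y) * pfun f L b σ y) := by
    show Real.exp (-σ) * (f (basept L b σ y)) ^ 2 * q0fun f L b σ y / (epsfun f L ginv b σ y * pfun f L b σ y * (L y) ^ 2) = _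
    rw [Real.exp_neg, hεval]
    exact sval0 _ _ _ _ _ _ hFne hLne hXAne hPne
  have hs1v : sm1fun f L ginv b σ y = pm1fun f L b σ y / ((Real.exp σ * pfun f L b σ y + msq L ginv b y * q0fun f L b σ y) * pfun f L b σ y) := by
    show pm1fun f L b σ y * (f (basept L b σ y)) ^ 2 / (epsfun f L ginv b σ y * pfun f L b σ y * (L y) ^ 2) = _
    rw [hεval]
    exact sval1 _ _ _ _ _ hFne hLne hXAne hPne
  have hs2v : sm2fun f L ginv b σ y = pm1fun f L b σ y * (Real.exp σ * msq L ginv b y * pfun f L b σ y * (L y) ^ 2 - bsq ginv b y * (f (basept L b σ y)) ^ 2)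
      / ((f (basept L b σ y)) ^ 2 * (Real.exp σ * pfun f L b σ y + msq L ginv b y * q0fun f L b σ y) * pfun f L b σ y * betaf b y) := by
    show pm1fun f L b σ y * (Real.exp σ * msq L ginv b y * pfun f L b σ y * (L y) ^ 2 - bsq ginv b y * (f (basept L b σ y)) ^ 2)
        / (epsfun f L ginv b σ y * pfun f L b σ y * betaf b y * (L y) ^ 2) = _
    rw [hεval]
    exact sval2 _ _ _ _ _ _ _ hFne hLne hXAne hPne hβne
  have halv : Real.exp (-σ) / pfun f L b σ y = (Real.exp σ)⁻¹ / pfun f L b σ y := by rw [Real.exp_neg]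
  have hXAd : (Real.exp σ * pfun f L b σ y + msq L ginv b y * q0fun f L b σ y) = Real.exp σ * (f (basept L b σ y) * pds f (basept L b σ y) / L y)
      + msq L ginv b y * (f (basept L b σ y) * (Real.exp σ ^ 2 * (L y) ^ 2 * pds (pds f) (basept L b σ y) / (betaf b y) ^ 2)) := by
    rw [hq0v, hPv]
  obtain ⟨key1, key2, key3, key4⟩ :=
    keys_scalar (Real.exp σ) (L y) (betaf b y) (f (basept L b σ y)) (pds f (basept L b σ y)) (pds (pds f) (basept L b σ y)) (msq L ginv b y) ((Real.exp σ * pfun f L b σ y + msq L ginv b y * q0fun f L b σ y))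
      (pfun f L b σ y) (q0fun f L b σ y) (p0fun f L b σ y) (pm1fun f L b σ y) (pm2fun f L b σ y) (bsq ginv b y) (s0fun f L ginv b σ y) (sm1fun f L ginv b σ y) (sm2fun f L ginv b σ y) (Real.exp (-σ) / pfun f L b σ y)
      hEne hLne hβne hFne hF1ne hXAne hXAd hPv hq0v hP0v hP1v hP2v hmsq' hs0v hs1v hs2v halv
  -- final assembly
  intro i j
  have T2 : ∑ r, ginv y i r * b r = bup ginv b y i := rfl
  have hsummand : ∀ r : Fin n,
      gbarinv f L ginv b σ y i r * gmet (Lbar f L b σ) y r j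
        = ((Real.exp (-σ) / pfun f L b σ y) * (Real.exp σ * pfun f L b σ y)) * (ginv y i r * gmet L y r j)
        + ((Real.exp (-σ) / pfun f L b σ y) * (p0fun f L b σ y * b j + Real.exp σ * pm1fun f L b σ y * ylow L y j)) * (ginv y i r * b r)
        + ((Real.exp (-σ) / pfun f L b σ y) * (Real.exp σ * pm1fun f L b σ y * b j + Real.exp σ * pm2fun f L b σ y * ylow L y j)) * (ginv y i r * ylow L y r)
        - ((s0fun f L ginv b σ y * bup ginv b y i + sm1fun f L ginv b σ y * y i) * (Real.exp σ * pfun f L b σ y)) * (bup ginv b y r * gmet L y r j)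
        - ((s0fun f L ginv b σ y * bup ginv b y i + sm1fun f L ginv b σ y * y i) * (p0fun f L b σ y * b j + Real.exp σ * pm1fun f L b σ y * ylow L y j)) * (bup ginv b y r * b r)
        - ((s0fun f L ginv b σ y * bup ginv b y i + sm1fun f L ginv b σ y * y i) * (Real.exp σ * pm1fun f L b σ y * b j + Real.exp σ * pm2fun f L b σ y * ylow L y j)) * (bup ginv b y r * ylow L y r)
        - ((sm1fun f L ginv b σ y * bup ginv b y i + sm2fun f L ginv b σ y * y i) * (Real.exp σ * pfun f L b σ y)) * (y r * gmet L y r j)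
        - ((sm1fun f L ginv b σ y * bup ginv b y i + sm2fun f L ginv b σ y * y i) * (p0fun f L b σ y * b j + Real.exp σ * pm1fun f L b σ y * ylow L y j)) * (y r * b r)
        - ((sm1fun f L ginv b σ y * bup ginv b y i + sm2fun f L ginv b σ y * y i) * (Real.exp σ * pm1fun f L b σ y * b j + Real.exp σ * pm2fun f L b σ y * ylow L y j)) * (y r * ylow L y r) := by
    intro r
    rw [hG r j]
    unfold gbarinv
    ring
  have hC1 : ((Real.exp (-σ) / pfun f L b σ y) * (Real.exp σ * pfun f L b σ y)) = 1 := by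
    rw [Real.exp_neg]
    field_simp
  calc ∑ r, gbarinv f L ginv b σ y i r * gmet (Lbar f L b σ) y r j
      = ∑ r, (((Real.exp (-σ) / pfun f L b σ y) * (Real.exp σ * pfun f L b σ y)) * (ginv y i r * gmet L y r j)
        + ((Real.exp (-σ) / pfun f L b σ y) * (p0fun f L b σ y * b j + Real.exp σ * pm1fun f L b σ y * ylow L y j)) * (ginv y i r * b r)
        + ((Real.exp (-σ) / pfun f L b σ y) * (Real.exp σ * pm1fun f L b σ y * b j + Real.exp σ * pm2fun f L b σ y * ylow L y j)) * (ginv y i r * ylow L y r)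
        - ((s0fun f L ginv b σ y * bup ginv b y i + sm1fun f L ginv b σ y * y i) * (Real.exp σ * pfun f L b σ y)) * (bup ginv b y r * gmet L y r j)
        - ((s0fun f L ginv b σ y * bup ginv b y i + sm1fun f L ginv b σ y * y i) * (p0fun f L b σ y * b j + Real.exp σ * pm1fun f L b σ y * ylow L y j)) * (bup ginv b y r * b r)
        - ((s0fun f L ginv b σ y * bup ginv b y i + sm1fun f L ginv b σ y * y i) * (Real.exp σ * pm1fun f L b σ y * b j + Real.exp σ * pm2fun f L b σ y * ylow L y j)) * (bup ginv b y r * ylow L y r)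
        - ((sm1fun f L ginv b σ y * bup ginv b y i + sm2fun f L ginv b σ y * y i) * (Real.exp σ * pfun f L b σ y)) * (y r * gmet L y r j)
        - ((sm1fun f L ginv b σ y * bup ginv b y i + sm2fun f L ginv b σ y * y i) * (p0fun f L b σ y * b j + Real.exp σ * pm1fun f L b σ y * ylow L y j)) * (y r * b r)
        - ((sm1fun f L ginv b σ y * bup ginv b y i + sm2fun f L ginv b σ y * y i) * (Real.exp σ * pm1fun f L b σ y * b j + Real.exp σ * pm2fun f L b σ y * ylow L y j)) * (y r * ylow L y r)) := Finset.sum_congr rfl fun r _ => hsummand r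
    _ = ((Real.exp (-σ) / pfun f L b σ y) * (Real.exp σ * pfun f L b σ y)) * (∑ r, ginv y i r * gmet L y r j)
        + ((Real.exp (-σ) / pfun f L b σ y) * (p0fun f L b σ y * b j + Real.exp σ * pm1fun f L b σ y * ylow L y j)) * (∑ r, ginv y i r * b r)
        + ((Real.exp (-σ) / pfun f L b σ y) * (Real.exp σ * pm1fun f L b σ y * b j + Real.exp σ * pm2fun f L b σ y * ylow L y j)) * (∑ r, ginv y i r * ylow L y r)
        - ((s0fun f L ginv b σ y * bup ginv b y i + sm1fun f L ginv b σ y * y i) * (Real.exp σ * pfun f L b σ y)) * (∑ r, bup ginv b y r * gmet L y r j)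
        - ((s0fun f L ginv b σ y * bup ginv b y i + sm1fun f L ginv b σ y * y i) * (p0fun f L b σ y * b j + Real.exp σ * pm1fun f L b σ y * ylow L y j)) * (∑ r, bup ginv b y r * b r)
        - ((s0fun f L ginv b σ y * bup ginv b y i + sm1fun f L ginv b σ y * y i) * (Real.exp σ * pm1fun f L b σ y * b j + Real.exp σ * pm2fun f L b σ y * ylow L y j)) * (∑ r, bup ginv b y r * ylow L y r)
        - ((sm1fun f L ginv b σ y * bup ginv b y i + sm2fun f L ginv b σ y * y i) * (Real.exp σ * pfun f L b σ y)) * (∑ r, y r * gmet L y r j)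
        - ((sm1fun f L ginv b σ y * bup ginv b y i + sm2fun f L ginv b σ y * y i) * (p0fun f L b σ y * b j + Real.exp σ * pm1fun f L b σ y * ylow L y j)) * (∑ r, y r * b r)
        - ((sm1fun f L ginv b σ y * bup ginv b y i + sm2fun f L ginv b σ y * y i) * (Real.exp σ * pm1fun f L b σ y * b j + Real.exp σ * pm2fun f L b σ y * ylow L y j)) * (∑ r, y r * ylow L y r) := by
          simp only [Finset.sum_add_distrib, Finset.sum_sub_distrib, ← Finset.mul_sum]
    _ = ((Real.exp (-σ) / pfun f L b σ y) * (Real.exp σ * pfun f L b σ y)) * (if i = j then (1:ℝ) else 0)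
        + ((Real.exp (-σ) / pfun f L b σ y) * (p0fun f L b σ y * b j + Real.exp σ * pm1fun f L b σ y * ylow L y j)) * bup ginv b y i
        + ((Real.exp (-σ) / pfun f L b σ y) * (Real.exp σ * pm1fun f L b σ y * b j + Real.exp σ * pm2fun f L b σ y * ylow L y j)) * y i
        - ((s0fun f L ginv b σ y * bup ginv b y i + sm1fun f L ginv b σ y * y i) * (Real.exp σ * pfun f L b σ y)) * b j
        - ((s0fun f L ginv b σ y * bup ginv b y i + sm1fun f L ginv b σ y * y i) * (p0fun f L b σ y * b j + Real.exp σ * pm1fun f L b σ y * ylow L y j)) * bsq ginv b y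
        - ((s0fun f L ginv b σ y * bup ginv b y i + sm1fun f L ginv b σ y * y i) * (Real.exp σ * pm1fun f L b σ y * b j + Real.exp σ * pm2fun f L b σ y * ylow L y j)) * betaf b y
        - ((sm1fun f L ginv b σ y * bup ginv b y i + sm2fun f L ginv b σ y * y i) * (Real.exp σ * pfun f L b σ y)) * ylow L y j
        - ((sm1fun f L ginv b σ y * bup ginv b y i + sm2fun f L ginv b σ y * y i) * (p0fun f L b σ y * b j + Real.exp σ * pm1fun f L b σ y * ylow L y j)) * betaf b y
        - ((sm1fun f L ginv b σ y * bup ginv b y i + sm2fun f L ginv b σ y * y i) * (Real.exp σ * pm1fun f L b σ y * b j + Real.exp σ * pm2fun f L b σ y * ylow L y j)) * (L y) ^ 2 := by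
          rw [hginv y hy i j, T2, T3 i, T4 j, T5, T6, T7 j, T8, T9]
    _ = if i = j then (1:ℝ) else 0 := by
          linear_combination (if i = j then (1:ℝ) else 0) * hC1
            + (bup ginv b y i * b j) * key1
            + (bup ginv b y i * ylow L y j) * key2
            + (y i * b j) * key3
            + (y i * ylow L y j) * key4
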